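/- Let Γ be a group with finite generating set S, and suppose Γ has subexponential word growth: for every ε > 0 there exists N such that |B_S(n)| ≤ exp(ε·n) for all n ≥ N, where B_S(n) = {g ∈ Γ : |g|_S ≤ n}. Then Γ is not sharply MIF: for every C > 0 there exist n ≥ 2 and a nontrivial w ∈ Γ∗⟨x⟩ with |w|_{S∪{x}} ≤ n such that w(g) = e for every g ∈ Γ with |g|_S ≤ C·log(n). -/

import Mathlib

open scoped Classical

/-- Word length of `g` with respect to generating set `S` (letters from `S ∪ S⁻¹`). -/
noncomputable def wordLength {G : Type*} [Group G] (S : Set G) (g : G) : ℕ :=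
  sInf {m | ∃ l : List G, l.length = m ∧ (∀ a ∈ l, a ∈ S ∨ a⁻¹ ∈ S) ∧ l.prod = g}

/-- The free product `G ∗ ⟨x⟩`. -/
abbrev FPZ (G : Type*) [Group G] := Monoid.Coprod G (Multiplicative ℤ)

/-- The stable letter `x` raised to the power `m`. -/
def xpow (G : Type*) [Group G] (m : ℤ) : FPZ G :=
  Monoid.Coprod.inr (Multiplicative.ofAdd m)

/-- Evaluation of words with constants: the unique hom `G ∗ ⟨x⟩ → G` restricting to
the identity on `G` and sending `x` to `g`. -/
def wordEval {G : Type*} [Group G] (g : G) : FPZ G →* G :=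
  Monoid.Coprod.lift (MonoidHom.id G) (zpowersHom G g)

/-- The generating set `S ∪ {x}` of `G ∗ ⟨x⟩`. -/
def genSet {G : Type*} [Group G] (S : Set G) : Set (FPZ G) :=
  ((Monoid.Coprod.inl : G →* FPZ G) '' S) ∪ {xpow G 1}

/-!
Let `s ∈ S` be nontrivial. For every `g`, the reduced word `x² (g⁻¹ s g) x⁻¹ s⁻¹ x⁻¹` vanishes at
`x = g`. Combining two such words `u, v` into `x [u, s v s⁻¹] x⁻¹` keeps the word reduced (hence
nontrivial in the free product) and produces a word vanishing wherever `u` or `v` does. Doing this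
along a balanced binary tree over an enumeration of the ball `B_S(R)` gives a nontrivial word of
length `O(|B_S(R)|² R)` vanishing on `B_S(R)`. For `R = ⌊C log n⌋`, subexponential growth gives
`|B_S(R)|² ≤ √n`, so this length is at most `n` once `n` is large.
-/

section WordBall

variable {G H : Type*} [Group G] [Group H] {T T' : Set G} {m n : ℕ} {g h : G}

def wordBall (T : Set G) (n : ℕ) : Set G :=
  {g | ∃ l : List G, l.length ≤ n ∧ (∀ a ∈ l, a ∈ T ∨ a⁻¹ ∈ T) ∧ l.prod = g}

lemma one_mem_wordBall (T : Set G) (n : ℕ) : (1 : G) ∈ wordBall T n :=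
  ⟨[], Nat.zero_le n, by simp, rfl⟩

lemma mem_wordBall_one_of_mem (hg : g ∈ T) : g ∈ wordBall T 1 :=
  ⟨[g], le_rfl, by simp [hg], by simp⟩

lemma wordBall_mono (hTT' : T ⊆ T') (hmn : m ≤ n) : wordBall T m ⊆ wordBall T' n := by
  rintro g ⟨l, hlen, hl, rfl⟩
  exact ⟨l, hlen.trans hmn, fun a ha => (hl a ha).imp (@hTT' _) (@hTT' _), rfl⟩

lemma mul_mem_wordBall (hg : g ∈ wordBall T m) (hh : h ∈ wordBall T n) :
    g * h ∈ wordBall T (m + n) := by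
  obtain ⟨l₁, hlen₁, hl₁, rfl⟩ := hg
  obtain ⟨l₂, hlen₂, hl₂, rfl⟩ := hh
  refine ⟨l₁ ++ l₂, by simpa using add_le_add hlen₁ hlen₂, ?_, List.prod_append⟩
  simpa only [List.mem_append, or_imp, forall_and] using ⟨hl₁, hl₂⟩

lemma inv_mem_wordBall (hg : g ∈ wordBall T n) : g⁻¹ ∈ wordBall T n := by
  obtain ⟨l, hlen, hl, rfl⟩ := hg
  refine ⟨(l.map (·⁻¹)).reverse, by simpa using hlen, ?_, by simp [List.prod_inv_reverse]⟩
  intro a ha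
  obtain ⟨b, hb, rfl⟩ := List.mem_map.1 (List.mem_reverse.1 ha)
  simpa [or_comm] using hl b hb

lemma pow_mem_wordBall (hg : g ∈ T) (n : ℕ) : g ^ n ∈ wordBall T n := by
  induction n with
  | zero => simpa using one_mem_wordBall T 0
  | succ n ih => simpa [pow_succ] using mul_mem_wordBall ih (mem_wordBall_one_of_mem hg)

lemma zpow_mem_wordBall (hg : g ∈ T) (k : ℤ) : g ^ k ∈ wordBall T k.natAbs := by
  cases k with
  | ofNat n => simpa using pow_mem_wordBall hg n
  | negSucc n => simpa using inv_mem_wordBall (pow_mem_wordBall hg (n + 1))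

lemma map_mem_wordBall (f : G →* H) (hg : g ∈ wordBall T n) : f g ∈ wordBall (f '' T) n := by
  obtain ⟨l, hlen, hl, rfl⟩ := hg
  refine ⟨l.map f, by simpa using hlen, ?_, (map_list_prod f l).symm⟩
  simp only [List.mem_map, forall_exists_index, and_imp, forall_apply_eq_imp_iff₂, ← map_inv]
  exact fun a ha => (hl a ha).imp (Set.mem_image_of_mem f) (Set.mem_image_of_mem f)

lemma wordBall_finite (hT : T.Finite) (n : ℕ) : (wordBall T n).Finite := by
  have : Finite ↥(T ∪ T⁻¹) := (hT.union hT.inv).to_subtype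
  refine ((List.finite_length_le ↥(T ∪ T⁻¹) n).image fun l => (l.map (↑)).prod).subset ?_
  rintro g ⟨l, hlen, hl, rfl⟩
  have hl' : ∀ a ∈ l, a ∈ T ∪ T⁻¹ := hl
  refine ⟨l.attach.map fun a => ⟨a.1, hl' a.1 a.2⟩, by simpa using hlen, ?_⟩
  simp [Function.comp_def]

lemma wordLength_le_of_mem_wordBall (hg : g ∈ wordBall T n) : wordLength T g ≤ n := by
  obtain ⟨l, hlen, hl, rfl⟩ := hg
  exact (Nat.sInf_le ⟨l, rfl, hl, rfl⟩ : wordLength T l.prod ≤ l.length).trans hlen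

lemma exists_mem_wordBall_of_mem_closure (hg : g ∈ Subgroup.closure T) :
    ∃ n, g ∈ wordBall T n := by
  induction hg using Subgroup.closure_induction with
  | mem g hg => exact ⟨1, mem_wordBall_one_of_mem hg⟩
  | one => exact ⟨0, one_mem_wordBall T 0⟩
  | mul g h _ _ hg hh =>
    obtain ⟨m, hg⟩ := hg
    obtain ⟨n, hh⟩ := hh
    exact ⟨m + n, mul_mem_wordBall hg hh⟩
  | inv g _ hg =>
    obtain ⟨n, hg⟩ := hg
    exact ⟨n, inv_mem_wordBall hg⟩

lemma mem_wordBall_wordLength (hg : g ∈ Subgroup.closure T) :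
    g ∈ wordBall T (wordLength T g) := by
  obtain ⟨n, l, -, hl, hprod⟩ := exists_mem_wordBall_of_mem_closure hg
  have hne :
      {m | ∃ l : List G, l.length = m ∧ (∀ a ∈ l, a ∈ T ∨ a⁻¹ ∈ T) ∧ l.prod = g}.Nonempty :=
    ⟨l.length, l, rfl, hl, hprod⟩
  obtain ⟨l, hlen, hl, hprod⟩ := Nat.sInf_mem hne
  exact ⟨l, hlen.le, hl, hprod⟩

lemma wordLength_le_iff_mem_wordBall (hT : Subgroup.closure T = ⊤) :
    wordLength T g ≤ n ↔ g ∈ wordBall T n :=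
  ⟨fun h => wordBall_mono le_rfl h (mem_wordBall_wordLength (hT ▸ Subgroup.mem_top g)),
    wordLength_le_of_mem_wordBall⟩

end WordBall

universe u

open Monoid

section ReducedWords

variable {Γ : Type u} [Group Γ]

/-- `Γ ∗ ⟨x⟩` as an indexed free product, so that Mathlib's reduced words `NeWord` apply;
the index `false` is the factor of the stable letter `x`. -/
def Factor (Γ : Type u) : Bool → Type u
  | true => Γ
  | false => ULift (Multiplicative ℤ)

instance : ∀ b, Group (Factor Γ b)
  | true => inferInstanceAs (Group Γ)
  | false => inferInstanceAs (Group (ULift (Multiplicative ℤ)))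

def xl (k : ℤ) : Factor Γ false := ULift.up (Multiplicative.ofAdd k)

lemma xl_mul_xl (k l : ℤ) : (xl k : Factor Γ false) * xl l = xl (k + l) := rfl

lemma xl_ne_one {k : ℤ} (hk : k ≠ 0) : (xl k : Factor Γ false) ≠ 1 :=
  fun h => hk (congrArg (fun a : Factor Γ false => Multiplicative.toAdd (ULift.down a)) h)

def gl (γ : Γ) : Factor Γ true := γ

lemma gl_ne_one {γ : Γ} (hγ : γ ≠ 1) : gl γ ≠ 1 := hγ

def toFPZ : CoprodI (Factor Γ) →* FPZ Γ :=
  CoprodI.lift fun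
    | true => Coprod.inl
    | false => Coprod.inr.comp MulEquiv.ulift.toMonoidHom

def ofFPZ : FPZ Γ →* CoprodI (Factor Γ) :=
  Coprod.lift (CoprodI.of (M := Factor Γ) (i := true) : Γ →* _)
    ((CoprodI.of (i := false)).comp MulEquiv.ulift.symm.toMonoidHom)

@[simp]
lemma toFPZ_of_gl (γ : Γ) : toFPZ (CoprodI.of (gl γ)) = Coprod.inl γ :=
  CoprodI.lift_of _ _

@[simp]
lemma toFPZ_of_xl (k : ℤ) : toFPZ (CoprodI.of (xl k : Factor Γ false)) = xpow Γ k :=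
  CoprodI.lift_of _ _

lemma ofFPZ_comp_toFPZ :
    (ofFPZ : FPZ Γ →* _).comp toFPZ = MonoidHom.id (CoprodI (Factor Γ)) := by
  refine CoprodI.ext_hom _ _ fun b => ?_
  cases b <;> ext <;> rfl

lemma toFPZ_injective : Function.Injective (toFPZ : CoprodI (Factor Γ) →* FPZ Γ) :=
  Function.LeftInverse.injective (g := ofFPZ) (DFunLike.congr_fun ofFPZ_comp_toFPZ)

lemma Monoid.CoprodI.NeWord.prod_ne_one {ι : Type*} {M : ι → Type*} [∀ i, Monoid (M i)]
    {i j : ι} (w : NeWord M i j) : w.prod ≠ 1 := fun h =>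
  w.toList_ne_nil <| congrArg Word.toList <|
    Word.equiv.symm.injective (a₁ := w.toWord) (a₂ := Word.empty) (h.trans Word.prod_empty.symm)

lemma toFPZ_neWord_prod_ne_one {i j : Bool} (w : CoprodI.NeWord (Factor Γ) i j) :
    toFPZ w.prod ≠ 1 :=
  (map_ne_one_iff _ toFPZ_injective).2 w.prod_ne_one

@[simp]
lemma wordEval_inl (g γ : Γ) : wordEval g (Coprod.inl γ) = γ :=
  Coprod.lift_apply_inl _ _ γ

@[simp]
lemma wordEval_xpow (g : Γ) (k : ℤ) : wordEval g (xpow Γ k) = g ^ k :=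
  Coprod.lift_apply_inr _ _ _

variable {S : Set Γ} {n : ℕ}

lemma xpow_mem_wordBall (k : ℤ) : xpow Γ k ∈ wordBall (genSet S) k.natAbs := by
  have hx : xpow Γ k = xpow Γ 1 ^ k := by
    rw [xpow, xpow, ← map_zpow, ← ofAdd_zsmul, smul_eq_mul, mul_one]
  exact hx ▸ zpow_mem_wordBall (T := genSet S) (Set.mem_union_right _ rfl) k

lemma inl_mem_wordBall {γ : Γ} (hγ : γ ∈ wordBall S n) :
    Coprod.inl γ ∈ wordBall (genSet S) n :=
  wordBall_mono Set.subset_union_left le_rfl (map_mem_wordBall (Coprod.inl : Γ →* FPZ Γ) hγ)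

end ReducedWords

section Blocks

variable {Γ : Type u} [Group Γ] {s : Γ}

open CoprodI

local notation:65 w₁:65 " ⬝ " w₂:66 => NeWord.append w₁ (by decide) w₂

def xLetter (k : ℤ) (hk : k ≠ 0) : NeWord (Factor Γ) false false :=
  .singleton (xl k) (xl_ne_one hk)

def gLetter (γ : Γ) (hγ : γ ≠ 1) : NeWord (Factor Γ) true true :=
  .singleton (gl γ) (gl_ne_one hγ)

@[simp]
lemma toFPZ_xLetter_prod (k : ℤ) (hk : k ≠ 0) :
    toFPZ (xLetter k hk : NeWord (Factor Γ) _ _).prod = xpow Γ k := by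
  simp [xLetter]

@[simp]
lemma toFPZ_gLetter_prod (γ : Γ) (hγ : γ ≠ 1) :
    toFPZ (gLetter γ hγ).prod = Coprod.inl γ := by
  rw [gLetter, NeWord.prod_singleton]
  exact toFPZ_of_gl γ

/-- The positive exponent of the first letter lets `x` be multiplied onto it without
cancellation in `Block.combine`. -/
structure Block (Γ : Type u) [Group Γ] where
  word : NeWord (Factor Γ) false false
  headExp : ℕ
  head_eq : word.head = xl (headExp + 1)

variable (hs : s ≠ 1)

def baseBlock (g : Γ) : Block Γ where
  word := xLetter 2 (by decide) ⬝
    gLetter (g⁻¹ * s * g) (by simpa [mul_assoc, inv_mul_eq_one] using hs) ⬝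
    xLetter (-1) (by decide) ⬝ gLetter s⁻¹ (inv_ne_one.2 hs) ⬝ xLetter (-1) (by decide)
  headExp := 1
  head_eq := rfl

def Block.commWord (u v : Block Γ) : NeWord (Factor Γ) false false :=
  u.word ⬝ gLetter s hs ⬝ v.word ⬝ gLetter s⁻¹ (inv_ne_one.2 hs) ⬝ u.word.inv ⬝
    gLetter s hs ⬝ v.word.inv ⬝ gLetter s⁻¹ (inv_ne_one.2 hs) ⬝ xLetter (-1) (by decide)

lemma Block.commWord_head (u v : Block Γ) : (u.commWord hs v).head = xl (u.headExp + 1) :=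
  u.head_eq

/-- The reduced form of `x [u, s v s⁻¹] x⁻¹`. -/
def Block.combine (u v : Block Γ) : Block Γ where
  word := (u.commWord hs v).mulHead (xl 1) <| by
    rw [u.commWord_head, xl_mul_xl]
    exact xl_ne_one (by omega)
  headExp := u.headExp + 1
  head_eq := by
    rw [NeWord.mulHead_head, u.commWord_head, xl_mul_xl]
    congr 1
    push_cast
    ring

lemma toFPZ_baseBlock (g : Γ) : toFPZ (baseBlock hs g).word.prod =
    xpow Γ 2 * Coprod.inl (g⁻¹ * s * g) * xpow Γ (-1) * Coprod.inl s⁻¹ * xpow Γ (-1) := by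
  simp only [baseBlock, NeWord.append_prod, map_mul, toFPZ_xLetter_prod, toFPZ_gLetter_prod]

lemma toFPZ_combine (u v : Block Γ) : toFPZ (u.combine hs v).word.prod =
    xpow Γ 1 * (toFPZ u.word.prod * Coprod.inl s * toFPZ v.word.prod * Coprod.inl s⁻¹ *
      (toFPZ u.word.prod)⁻¹ * Coprod.inl s * (toFPZ v.word.prod)⁻¹ * Coprod.inl s⁻¹ *
      xpow Γ (-1)) := by
  simp only [Block.combine, Block.commWord, NeWord.mulHead_prod, NeWord.append_prod,
    NeWord.inv_prod, map_mul, map_inv, toFPZ_xLetter_prod, toFPZ_gLetter_prod, toFPZ_of_xl]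

def block : ℕ → (ℕ → Γ) → Block Γ
  | 0, f => baseBlock hs (f 0)
  | d + 1, f => (block d f).combine hs (block d fun i => f (i + 2 ^ d))

lemma wordEval_block {g : Γ} : ∀ {d : ℕ} {f : ℕ → Γ}, (∃ i < 2 ^ d, f i = g) →
    wordEval g (toFPZ (block hs d f).word.prod) = 1
  | 0, f, ⟨0, _, hf⟩ => by
    simp only [block, toFPZ_baseBlock, map_mul, wordEval_xpow, wordEval_inl, hf]
    group
  | d + 1, f, ⟨i, hi, hf⟩ => by
    simp only [block, toFPZ_combine, map_mul, map_inv, wordEval_xpow, wordEval_inl]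
    rcases lt_or_ge i (2 ^ d) with hid | hid
    · rw [wordEval_block ⟨i, hid, hf⟩]
      group
    · rw [pow_succ] at hi
      rw [wordEval_block (f := fun i => f (i + 2 ^ d))
        ⟨i - 2 ^ d, by omega, by rwa [Nat.sub_add_cancel hid]⟩]
      group

lemma toFPZ_block_mem_wordBall {S : Set Γ} (hsS : s ∈ S) {R : ℕ} :
    ∀ {d : ℕ} {f : ℕ → Γ}, (∀ i < 2 ^ d, f i ∈ wordBall S R) →
      toFPZ (block hs d f).word.prod ∈ wordBall (genSet S) (4 ^ d * (2 * R + 8) - 2)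
  | 0, f, hf => by
    have hs₁ : s ∈ wordBall S 1 := mem_wordBall_one_of_mem hsS
    have hf₀ := hf 0 (by norm_num)
    have hconj := mul_mem_wordBall (mul_mem_wordBall (inv_mem_wordBall hf₀) hs₁) hf₀
    have hw := mul_mem_wordBall (mul_mem_wordBall (mul_mem_wordBall (mul_mem_wordBall
      (xpow_mem_wordBall 2) (inl_mem_wordBall hconj)) (xpow_mem_wordBall (-1)))
      (inl_mem_wordBall (inv_mem_wordBall hs₁))) (xpow_mem_wordBall (-1))
    rw [block, toFPZ_baseBlock]
    exact wordBall_mono subset_rfl (by norm_num; omega) hw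
  | d + 1, f, hf => by
    have hd : 2 ^ (d + 1) = 2 ^ d + 2 ^ d := by ring
    have hU := toFPZ_block_mem_wordBall hsS (d := d) (f := f) fun i hi => hf i (by omega)
    have hV := toFPZ_block_mem_wordBall hsS (d := d) (f := fun i => f (i + 2 ^ d))
      fun i hi => hf (i + 2 ^ d) (by omega)
    have hs₁ : Coprod.inl s ∈ wordBall (genSet S) 1 :=
      inl_mem_wordBall (mem_wordBall_one_of_mem hsS)
    have hs₁' : Coprod.inl s⁻¹ ∈ wordBall (genSet S) 1 := by
      simpa using inv_mem_wordBall hs₁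
    have hw := mul_mem_wordBall (xpow_mem_wordBall 1) <| mul_mem_wordBall (mul_mem_wordBall
      (mul_mem_wordBall (mul_mem_wordBall (mul_mem_wordBall (mul_mem_wordBall
      (mul_mem_wordBall (mul_mem_wordBall hU hs₁) hV) hs₁') (inv_mem_wordBall hU)) hs₁)
      (inv_mem_wordBall hV)) hs₁') (xpow_mem_wordBall (-1))
    rw [block, toFPZ_combine]
    refine wordBall_mono subset_rfl ?_ hw
    have hB : 4 ^ (d + 1) * (2 * R + 8) = 4 * (4 ^ d * (2 * R + 8)) := by ring
    have hB₈ : 8 ≤ 4 ^ d * (2 * R + 8) :=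
      le_mul_of_one_le_of_le (Nat.one_le_pow _ _ (by norm_num)) (by omega)
    norm_num
    omega

end Blocks

section Growth

open Filter Real

lemma eventually_four_mul_sqrt_mul_log_le (C : ℝ) :
    ∀ᶠ x : ℝ in atTop, 4 * √x * (2 * C * log x + 8) ≤ x := by
  have hsmall : (fun x => 4 * (2 * C * log x + 8)) =o[atTop] fun x : ℝ => √x := by
    simp_rw [sqrt_eq_rpow]
    exact (((isLittleO_log_rpow_atTop (by norm_num)).const_mul_left (2 * C)).add
      (Asymptotics.isLittleO_const_left.2 <| Or.inr <|
        tendsto_norm_atTop_atTop.comp (tendsto_rpow_atTop (by norm_num)))).const_mul_left 4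
  filter_upwards [hsmall.bound one_pos, eventually_ge_atTop 0] with x hx hx0
  rw [norm_eq_abs, norm_eq_abs, one_mul, abs_of_nonneg (sqrt_nonneg x)] at hx
  calc 4 * √x * (2 * C * log x + 8) = √x * (4 * (2 * C * log x + 8)) := by ring
    _ ≤ √x * √x := mul_le_mul_of_nonneg_left ((le_abs_self _).trans hx) (sqrt_nonneg x)
    _ = x := mul_self_sqrt hx0

lemma exists_four_mul_sq_mul_le_of_subexponential {b : ℕ → ℕ}
    (hb : ∀ ε : ℝ, 0 < ε → ∃ N : ℕ, ∀ n : ℕ, N ≤ n → (b n : ℝ) ≤ exp (ε * n))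
    {C : ℝ} (hC : 0 < C) :
    ∃ n : ℕ, 2 ≤ n ∧ 4 * b ⌊C * log n⌋₊ ^ 2 * (2 * ⌊C * log n⌋₊ + 8) ≤ n := by
  obtain ⟨N, hN⟩ := hb (1 / (4 * C)) (by positivity)
  have hlog : Tendsto (fun n : ℕ => C * log n) atTop atTop :=
    (tendsto_log_atTop.comp tendsto_natCast_atTop_atTop).const_mul_atTop hC
  obtain ⟨n, hn2, hnN, hn⟩ := ((eventually_ge_atTop 2).and <|
    ((tendsto_nat_floor_atTop.comp hlog).eventually_ge_atTop N).and <|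
      tendsto_natCast_atTop_atTop.eventually (eventually_four_mul_sqrt_mul_log_le C)).exists
  refine ⟨n, hn2, ?_⟩
  set R := ⌊C * log n⌋₊
  have hR : (R : ℝ) ≤ C * log n := Nat.floor_le (by positivity)
  have hbR : (b R : ℝ) ^ 2 ≤ √n :=
    calc (b R : ℝ) ^ 2 ≤ exp (1 / (4 * C) * R) ^ 2 :=
          pow_le_pow_left₀ (by positivity) (hN R hnN) 2
      _ = exp (1 / (2 * C) * R) := by rw [sq, ← exp_add]; ring_nf
      _ ≤ exp (log n * (1 / 2)) := by
        refine exp_le_exp.2 ((mul_le_mul_of_nonneg_left hR (by positivity)).trans_eq ?_)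
        field_simp
      _ = √n := by rw [sqrt_eq_rpow, rpow_def_of_pos (by positivity)]
  have hbound : (4 * b R ^ 2 * (2 * R + 8) : ℝ) ≤ n :=
    calc (4 * b R ^ 2 * (2 * R + 8) : ℝ) ≤ 4 * √n * (2 * C * log n + 8) := by
          gcongr 4 * ?_ * ?_; linarith
      _ ≤ n := hn
  exact_mod_cast hbound

end Growth

lemma Finset.exists_surjOn_Iio_card {α : Type*} {A : Finset α} {a : α} (ha : a ∈ A) :
    ∃ f : ℕ → α, (∀ i, f i ∈ A) ∧ Set.SurjOn f (Set.Iio A.card) A := by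
  refine ⟨fun i => A.toList.getD i a, fun i => ?_, fun g hg => ?_⟩
  · dsimp only
    rcases lt_or_ge i A.toList.length with hi | hi
    · rw [List.getD_eq_getElem _ _ hi]
      exact Finset.mem_toList.1 (List.getElem_mem hi)
    · rwa [List.getD_eq_default _ _ hi]
  · obtain ⟨i, hi, rfl⟩ := List.getElem_of_mem (Finset.mem_toList.2 hg)
    exact ⟨i, Finset.length_toList A ▸ hi, List.getD_eq_getElem _ _ hi⟩

lemma exists_ne_one_forall_wordEval_eq_one_of_mem {Γ : Type u} [Group Γ] {S : Set Γ}
    (hS : Subgroup.closure S = ⊤) {s : Γ} (hsS : s ∈ S) (hs : s ≠ 1) {R : ℕ} {A : Finset Γ}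
    (hA : A.Nonempty) (hAR : ∀ g ∈ A, wordLength S g ≤ R) :
    ∃ w : FPZ Γ, w ≠ 1 ∧ wordLength (genSet S) w ≤ 4 * A.card ^ 2 * (2 * R + 8) ∧
      ∀ g ∈ A, wordEval g w = 1 := by
  obtain ⟨f, hfA, hfsurj⟩ := Finset.exists_surjOn_Iio_card hA.choose_spec
  set k := A.card
  set d := Nat.log 2 k + 1
  have hk : k < 2 ^ d := Nat.lt_pow_succ_log_self (by norm_num) k
  have hd : 2 ^ d ≤ 2 * k := by
    rw [pow_succ, mul_comm]
    exact Nat.mul_le_mul_left 2 (Nat.pow_log_le_self 2 hA.card_pos.ne')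
  have hf (i : ℕ) : f i ∈ wordBall S R :=
    (wordLength_le_iff_mem_wordBall hS).1 (hAR _ (hfA i))
  have hcover (g : Γ) (hg : g ∈ A) : ∃ i < 2 ^ d, f i = g := by
    obtain ⟨i, hi, rfl⟩ := hfsurj hg
    exact ⟨i, lt_trans hi hk, rfl⟩
  refine ⟨_, toFPZ_neWord_prod_ne_one (block hs d f).word, ?_,
    fun g hg => wordEval_block hs (hcover g hg)⟩
  refine (wordLength_le_of_mem_wordBall
    (toFPZ_block_mem_wordBall hs hsS fun i _ => hf i)).trans ?_
  calc 4 ^ d * (2 * R + 8) - 2 ≤ (2 ^ d) ^ 2 * (2 * R + 8) := by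
        rw [← pow_mul, mul_comm d, pow_mul]; norm_num
    _ ≤ (2 * k) ^ 2 * (2 * R + 8) := by gcongr
    _ = 4 * k ^ 2 * (2 * R + 8) := by ring

theorem exists_ne_one_forall_wordEval_eq_one {Γ : Type u} [Group Γ] {S : Set Γ}
    (hS : Subgroup.closure S = ⊤) {R : ℕ} {A : Finset Γ} (hA : A.Nonempty)
    (hAR : ∀ g ∈ A, wordLength S g ≤ R) :
    ∃ w : FPZ Γ, w ≠ 1 ∧ wordLength (genSet S) w ≤ 4 * A.card ^ 2 * (2 * R + 8) ∧
      ∀ g ∈ A, wordEval g w = 1 := by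
  by_cases hS₁ : ∃ s ∈ S, s ≠ 1
  · obtain ⟨s, hsS, hs⟩ := hS₁
    exact exists_ne_one_forall_wordEval_eq_one_of_mem hS hsS hs hA hAR
  push Not at hS₁
  have hbot : (⊤ : Subgroup Γ) = ⊥ := hS.symm.trans (Subgroup.closure_eq_bot_iff.2 hS₁)
  have htriv (g : Γ) : g = 1 := Subgroup.mem_bot.1 (hbot ▸ Subgroup.mem_top g)
  refine ⟨xpow Γ 1, by simpa using toFPZ_neWord_prod_ne_one (xLetter 1 one_ne_zero), ?_,
    fun g _ => by simp [htriv g]⟩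
  refine (wordLength_le_of_mem_wordBall (xpow_mem_wordBall 1)).trans ?_
  exact Nat.one_le_iff_ne_zero.2 (by simp [hA.ne_empty])

theorem stmt19 (Γ : Type*) [Group Γ] (S : Set Γ) (hSfin : S.Finite)
    (hSgen : Subgroup.closure S = ⊤)
    (hgrowth : ∀ ε : ℝ, 0 < ε → ∃ N : ℕ, ∀ n : ℕ, N ≤ n →
      (Nat.card {g : Γ // wordLength S g ≤ n} : ℝ) ≤ Real.exp (ε * n)) :
    ∀ C : ℝ, 0 < C → ∃ n : ℕ, 2 ≤ n ∧ ∃ w : FPZ Γ, w ≠ 1 ∧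
      wordLength (genSet S) w ≤ n ∧
      ∀ g : Γ, (wordLength S g : ℝ) ≤ C * Real.log n → wordEval g w = 1 := by
  intro C hC
  obtain ⟨n, hn2, hn⟩ := exists_four_mul_sq_mul_le_of_subexponential hgrowth hC
  set R := ⌊C * Real.log n⌋₊
  have hball : {g : Γ | wordLength S g ≤ R}.Finite :=
    (wordBall_finite hSfin R).subset fun g => (wordLength_le_iff_mem_wordBall hSgen).1
  have hone : wordLength S (1 : Γ) ≤ R :=
    (wordLength_le_iff_mem_wordBall hSgen).2 (one_mem_wordBall S R)
  obtain ⟨w, hw, hwlen, hweval⟩ := exists_ne_one_forall_wordEval_eq_one hSgen (R := R)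
    (A := hball.toFinset) ⟨1, by simpa using hone⟩ (by simp)
  rw [← Nat.card_eq_card_finite_toFinset hball] at hwlen
  exact ⟨n, hn2, w, hw, hwlen.trans hn, fun g hg => hweval g (by simpa using Nat.le_floor hg)⟩
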